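/- Let α > 0, let f ∈ L¹[−π,π] with f ≥ 0, let b ∈ (−π,0) ∪ (0,π), let f_H be the polarization of f with respect to b, and let u_f and u_{f_H} be the solutions of the Robin problem with heat sources f and f_H respectively. If φ : ℝ → ℝ is convex and strictly increasing, then ∫_{−π}^{π} φ(u_f(x)) dx = ∫_{−π}^{π} φ(u_{f_H}(x)) dx if and only if f = f_H almost everywhere on [−π,π]. -/

import Mathlib

/-!
For `0 < b < π` write `σ y = 2b - y`, `u = u_f` and `v = u_{f_H}`. Since `f ≤ f_H` on
`[2b - π, b]` and `f_H + f_H ∘ σ = f + f ∘ σ` there, `v - u` is the integral of `f_H - f` over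
`[2b - π, b]` against `G(x, y) - G(x, σ y)`, a kernel that is nonnegative for `x ≤ b` and whose
values at `x` and `σ x` add up to `2 c_α b (b - y)`. Hence `u ≤ v` on `[-π, b]`, and for
`x ∈ [2b - π, b]` the pair `(v x, v (σ x))` weakly majorizes `(u x, u (σ x))` (the cross inequality
`u (σ x) ≤ v x` is where `f ≥ 0` enters). Convexity and monotonicity of `φ` then make
`∫ φ ∘ v - ∫ φ ∘ u` the integral of a continuous nonnegative function. If it vanishes, that
function vanishes at the fixed point `x = b`, so `u b = v b`, i.e. `∫ (b - y) (f_H - f)(y) dy = 0`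
over `[2b - π, b]`; this forces `f_H = f` a.e. on `[2b - π, b]`, and on `[b, π]` by reflection.
The case `b < 0` is the mirror image under `x ↦ -x`.
-/

open MeasureTheory Real Set

/-- The constant `c_α = α/(1+απ)`. -/
noncomputable def cA (α : ℝ) : ℝ := α / (1 + α * π)

/-- The Green's function of the Robin problem on `[-π, π]`. -/
noncomputable def robinGreen (α x y : ℝ) : ℝ :=
  -(1/2) * cA α * x * y - (1/2) * |x - y| + 1 / (2 * cA α)

/-- The solution of the Robin problem with heat source `f`. -/
noncomputable def robinSol (α : ℝ) (f : ℝ → ℝ) (x : ℝ) : ℝ :=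
  ∫ y in (-π)..π, robinGreen α x y * f y

/-- The polarization (towards zero) of `f : [-π,π] → ℝ` with respect to `b`. -/
noncomputable def polar (b : ℝ) (f : ℝ → ℝ) (x : ℝ) : ℝ :=
  if 0 < b then
    if x < 2 * b - π then f x
    else if x ≤ b then max (f x) (f (2 * b - x))
    else min (f x) (f (2 * b - x))
  else
    if x ≤ b then min (f x) (f (2 * b - x))
    else if x ≤ 2 * b + π then max (f x) (f (2 * b - x))
    else f x

open intervalIntegral

lemma ConvexOn.map_add_map_le_of_add_eq {φ : ℝ → ℝ} (hφ : ConvexOn ℝ univ φ) {p q r s : ℝ}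
    (hp : p ≤ s) (hq : q ≤ s) (hsum : p + q = r + s) : φ p + φ q ≤ φ r + φ s := by
  rcases (show r ≤ s by linarith).eq_or_lt with rfl | hrs
  · obtain rfl : p = r := by linarith
    obtain rfl : q = p := by linarith
    rfl
  set t := (p - r) / (s - r)
  have ht₀ : 0 ≤ t := div_nonneg (by linarith) (by linarith)
  have ht₁ : t ≤ 1 := div_le_one_of_le₀ (by linarith) (by linarith)
  have hp' : t * s + (1 - t) * r = p := by simp only [t]; field_simp; ring
  have hq' : (1 - t) * s + t * r = q := by
    rw [show q = s - (p - r) by linarith, ← hp']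
    ring
  have h₁ := hφ.2 (mem_univ s) (mem_univ r) ht₀ (sub_nonneg.2 ht₁) (by ring)
  have h₂ := hφ.2 (mem_univ s) (mem_univ r) (sub_nonneg.2 ht₁) ht₀ (by ring)
  simp only [smul_eq_mul, hp', hq'] at h₁ h₂
  linarith

lemma ConvexOn.map_add_map_le_of_weakMajorization {φ : ℝ → ℝ} (hφ : ConvexOn ℝ univ φ)
    (hφm : Monotone φ) {p q p' q' : ℝ} (hp : p ≤ p') (hq : q ≤ p') (hsum : p + q ≤ p' + q') :
    φ p + φ q ≤ φ p' + φ q' := by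
  have := hφ.map_add_map_le_of_add_eq hp hq (r := p + q - p') (by ring)
  have := hφm (show p + q - p' ≤ q' by linarith)
  linarith

lemma integral_eq_integral_add_integral_add_reflect {F : ℝ → ℝ} {a c m : ℝ}
    (hF : IntervalIntegrable F volume a c) (ha : a ≤ 2 * m - c) (hc : m ≤ c) :
    ∫ x in a..c, F x
      = (∫ x in a..(2 * m - c), F x) + ∫ x in (2 * m - c)..m, (F x + F (2 * m - x)) := by
  have hmem {x : ℝ} (h₁ : a ≤ x) (h₂ : x ≤ c) : x ∈ uIcc a c := mem_uIcc_of_le h₁ h₂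
  have h₁ : IntervalIntegrable F volume a (2 * m - c) :=
    hF.mono_set (uIcc_subset_uIcc left_mem_uIcc (hmem ha (by linarith)))
  have h₂ : IntervalIntegrable F volume (2 * m - c) m :=
    hF.mono_set (uIcc_subset_uIcc (hmem ha (by linarith)) (hmem (by linarith) hc))
  have h₃ : IntervalIntegrable F volume m c :=
    hF.mono_set (uIcc_subset_uIcc (hmem (by linarith) hc) right_mem_uIcc)
  have h₃' : IntervalIntegrable (fun x => F (2 * m - x)) volume (2 * m - c) m := by
    have := (h₃.comp_sub_left (2 * m)).symm
    rwa [show 2 * m - m = m by ring] at this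
  have e := integral_comp_sub_left (a := 2 * m - c) (b := m) F (2 * m)
  rw [show 2 * m - m = m by ring, sub_sub_cancel] at e
  rw [integral_add h₂ h₃', e, integral_add_adjacent_intervals h₂ h₃,
    integral_add_adjacent_intervals h₁ (h₂.trans h₃)]

lemma cA_pos {α : ℝ} (hα : 0 < α) : 0 < cA α := div_pos hα (by positivity)

lemma cA_mul_pi_lt_one {α : ℝ} (hα : 0 < α) : cA α * π < 1 := by
  rw [cA, div_mul_eq_mul_div, div_lt_one (by positivity)]
  linarith

section Green

variable {α : ℝ}

lemma robinGreen_comm (α x y : ℝ) : robinGreen α x y = robinGreen α y x := by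
  simp only [robinGreen, abs_sub_comm x y]
  ring

lemma robinGreen_neg_neg (α x y : ℝ) : robinGreen α (-x) (-y) = robinGreen α x y := by
  simp only [robinGreen, show -x - -y = -(x - y) by ring, abs_neg]
  ring

lemma robinGreen_reflect_left (α b x y : ℝ) :
    robinGreen α (2 * b - x) y = robinGreen α x (2 * b - y) - cA α * b * (y - x) := by
  simp only [robinGreen, show x - (2 * b - y) = -(2 * b - x - y) by ring, abs_neg]
  ring

lemma robinGreen_reflect_reflect (α b x y : ℝ) :
    robinGreen α (2 * b - x) (2 * b - y) = robinGreen α x y - cA α * b * (2 * b - x - y) := by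
  simp only [robinGreen, show 2 * b - x - (2 * b - y) = -(x - y) by ring, abs_neg]
  ring

lemma continuous_robinGreen (α x : ℝ) : Continuous (robinGreen α x) := by
  unfold robinGreen
  fun_prop

lemma abs_robinGreen_sub_le (hα : 0 < α) {y : ℝ} (hy : |y| ≤ π) (x z : ℝ) :
    |robinGreen α x y - robinGreen α z y| ≤ (cA α * π + 1) / 2 * |x - z| := by
  have hc := cA_pos hα
  have h₁ : |cA α * ((x - z) * y)| ≤ cA α * π * |x - z| := by
    rw [abs_mul, abs_of_pos hc, abs_mul, mul_assoc, mul_comm π]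
    gcongr
  have h₂ : |(|x - y| - |z - y|)| ≤ |x - z| := by
    simpa using abs_abs_sub_abs_le_abs_sub (x - y) (z - y)
  have e : robinGreen α x y - robinGreen α z y
      = -(1 / 2) * (cA α * ((x - z) * y)) - 1 / 2 * (|x - y| - |z - y|) := by
    unfold robinGreen
    ring
  rw [e, abs_le]
  rw [abs_le] at h₁ h₂
  constructor <;> linarith

noncomputable def polarKernel (α b x y : ℝ) : ℝ := robinGreen α x y - robinGreen α x (2 * b - y)

lemma continuous_polarKernel (α b x : ℝ) : Continuous (polarKernel α b x) :=
  (continuous_robinGreen α x).sub ((continuous_robinGreen α x).comp (by fun_prop))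

lemma polarKernel_add_polarKernel_reflect (α b x y : ℝ) :
    polarKernel α b x y + polarKernel α b (2 * b - x) y = 2 * cA α * b * (b - y) := by
  rw [polarKernel, polarKernel, robinGreen_reflect_left, robinGreen_reflect_reflect]
  ring

lemma polarKernel_nonneg (hα : 0 < α) {b x y : ℝ} (hb : 0 ≤ b) (hx : x ∈ Icc (-π) b)
    (hy : y ∈ Icc (2 * b - π) b) : 0 ≤ polarKernel α b x y := by
  obtain ⟨hx₁, hx₂⟩ := hx
  obtain ⟨hy₁, hy₂⟩ := hy
  have hc := cA_pos hα
  have hcπ := cA_mul_pi_lt_one hα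
  have hreflect : |x - (2 * b - y)| = 2 * b - x - y := by
    rw [abs_of_nonpos (by linarith)]
    ring
  rcases le_total x y with hxy | hyx
  · have e : polarKernel α b x y = (b - y) * (1 + cA α * x) := by
      rw [polarKernel, robinGreen, robinGreen, hreflect, abs_of_nonpos (by linarith)]
      ring
    rw [e]
    exact mul_nonneg (by linarith) (by nlinarith)
  · have e : polarKernel α b x y = (b - x) + cA α * x * (b - y) := by
      rw [polarKernel, robinGreen, robinGreen, hreflect, abs_of_nonneg (by linarith)]
      ring
    rw [e]
    rcases le_total 0 x with hx₀ | hx₀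
    · nlinarith [mul_nonneg (mul_nonneg hc.le hx₀) (by linarith : 0 ≤ b - y)]
    · nlinarith [mul_nonneg (neg_nonneg.2 hx₀) (by nlinarith : 0 ≤ 1 - cA α * (b - y))]

-- The integrand of `u_f (2b - x) ≤ u_{f_H} x` at `y` and `2b - y`; `A = f y`, `B = f (2b - y)`.
lemma robinGreen_reflect_mul_add_le (hα : 0 < α) {b x y A B : ℝ} (hb : 0 ≤ b)
    (hx : x ∈ Icc (2 * b - π) b) (hy : y ∈ Icc (2 * b - π) b) (hA : 0 ≤ A) (hB : 0 ≤ B) :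
    robinGreen α (2 * b - x) y * A + robinGreen α (2 * b - x) (2 * b - y) * B
      ≤ robinGreen α x y * max A B + robinGreen α x (2 * b - y) * min A B := by
  have hcb : 0 ≤ cA α * b := mul_nonneg (cA_pos hα).le hb
  rw [robinGreen_reflect_left, robinGreen_reflect_reflect]
  rcases le_total A B with hAB | hBA
  · rw [max_eq_right hAB, min_eq_left hAB]
    nlinarith [mul_nonneg hcb (mul_nonneg (by linarith [hx.2, hy.2] : 0 ≤ 2 * b - x - y)
      (sub_nonneg.2 hAB)), mul_nonneg hcb (mul_nonneg (by linarith [hx.2] : 0 ≤ b - x) hA)]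
  · rw [max_eq_left hBA, min_eq_right hBA]
    have hD : 0 ≤ polarKernel α b y x :=
      polarKernel_nonneg hα hb ⟨by linarith [hy.1], hy.2⟩ hx
    have e : polarKernel α b y x
        = robinGreen α x y - robinGreen α x (2 * b - y) + cA α * b * (y - x) := by
      rw [polarKernel, robinGreen_comm α y x, robinGreen_comm α y, robinGreen_reflect_left]
      ring
    nlinarith [mul_nonneg hD (sub_nonneg.2 hBA),
      mul_nonneg hcb (mul_nonneg (by linarith [hx.2] : 0 ≤ b - x) hB)]

end Green

section Polar

variable {b : ℝ} {f : ℝ → ℝ} {x : ℝ}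

lemma polar_eq_self_of_lt (hb : 0 < b) (hx : x < 2 * b - π) : polar b f x = f x := by
  simp only [polar, if_pos hb, if_pos hx]

lemma polar_eq_max (hb : 0 < b) (hx : x ∈ Icc (2 * b - π) b) :
    polar b f x = max (f x) (f (2 * b - x)) := by
  simp only [polar, if_pos hb, if_neg (not_lt.2 hx.1), if_pos hx.2]

lemma polar_eq_min (hb : 0 < b) (hx₁ : 2 * b - π ≤ x) (hx₂ : b < x) :
    polar b f x = min (f x) (f (2 * b - x)) := by
  simp only [polar, if_pos hb, if_neg (not_lt.2 hx₁), if_neg (not_le.2 hx₂)]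

lemma polar_reflect_eq_min (hb : 0 < b) (hbπ : b ≤ π) (hx : x ∈ Icc (2 * b - π) b) :
    polar b f (2 * b - x) = min (f x) (f (2 * b - x)) := by
  rcases hx.2.lt_or_eq with hlt | rfl
  · rw [polar_eq_min hb (by linarith [hx.2]) (by linarith), sub_sub_cancel, min_comm]
  · rw [show 2 * x - x = x by ring, polar_eq_max hb hx, show 2 * x - x = x by ring, max_self,
      min_self]

lemma polar_add_polar_reflect (hb : 0 < b) (hbπ : b ≤ π) (hx : x ∈ Icc (2 * b - π) b) :
    polar b f x + polar b f (2 * b - x) = f x + f (2 * b - x) := by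
  rw [polar_eq_max hb hx, polar_reflect_eq_min hb hbπ hx, max_add_min]

lemma le_polar_of_mem_Icc (hb : 0 < b) (hx : x ∈ Icc (2 * b - π) b) : f x ≤ polar b f x := by
  rw [polar_eq_max hb hx]
  exact le_max_left _ _

lemma polar_neg_comp_neg (hb : b ∈ Ioo (-π) 0) (f : ℝ → ℝ) (x : ℝ) :
    polar (-b) (fun t => f (-t)) x = polar b f (-x) := by
  obtain ⟨hb₁, hb₂⟩ := hb
  have e : -(2 * -b - x) = 2 * b - -x := by ring
  simp only [polar, if_pos (neg_pos.2 hb₂), if_neg (not_lt.2 hb₂.le), e]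
  split_ifs <;> first
    | rfl
    | (exfalso; linarith)
    | (obtain rfl : x = -b := by linarith
       simp only [neg_neg, show 2 * b - b = b by ring, max_self, min_self])

lemma intervalIntegrable_comp_reflect (hf : IntervalIntegrable f volume (-π) π) (hb : 0 ≤ b)
    (hbπ : b ≤ π) : IntervalIntegrable (fun y => f (2 * b - y)) volume (2 * b - π) π := by
  have h := ((hf.mono_set (c := 2 * b - π) (d := π) (uIcc_subset_uIcc
    (mem_uIcc_of_le (by linarith) (by linarith)) right_mem_uIcc)).comp_sub_left (2 * b)).symm
  rwa [sub_sub_cancel] at h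

lemma intervalIntegrable_polar (hf : IntervalIntegrable f volume (-π) π) (hb : 0 < b)
    (hbπ : b ≤ π) : IntervalIntegrable (polar b f) volume (-π) π := by
  have hf' := intervalIntegrable_comp_reflect hf hb.le hbπ
  have hsub (c d : ℝ) (h₁ : -π ≤ c) (h₂ : c ≤ d) (h₃ : d ≤ π) : uIcc c d ⊆ uIcc (-π) π :=
    uIcc_subset_uIcc (mem_uIcc_of_le h₁ (by linarith)) (mem_uIcc_of_le (by linarith) h₃)
  have hsub' (c d : ℝ) (h₁ : 2 * b - π ≤ c) (h₂ : c ≤ d) (h₃ : d ≤ π) :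
      uIcc c d ⊆ uIcc (2 * b - π) π :=
    uIcc_subset_uIcc (mem_uIcc_of_le h₁ (by linarith)) (mem_uIcc_of_le (by linarith) h₃)
  have hL : IntervalIntegrable (polar b f) volume (-π) (2 * b - π) := by
    refine (hf.mono_set (hsub _ _ le_rfl (by linarith) (by linarith))).congr_uIoo fun y hy => ?_
    rw [uIoo_of_le (by linarith)] at hy
    exact (polar_eq_self_of_lt hb hy.2).symm
  have hM : IntervalIntegrable (polar b f) volume (2 * b - π) b := by
    have h₁ := hf.mono_set (hsub (2 * b - π) b (by linarith) (by linarith) hbπ)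
    have h₂ := hf'.mono_set (hsub' (2 * b - π) b le_rfl (by linarith) hbπ)
    refine IntervalIntegrable.congr_uIoo ⟨h₁.1.sup h₂.1, h₁.2.sup h₂.2⟩ fun y hy => ?_
    rw [uIoo_of_le (by linarith)] at hy
    exact (polar_eq_max hb ⟨hy.1.le, hy.2.le⟩).symm
  have hR : IntervalIntegrable (polar b f) volume b π := by
    have h₁ := hf.mono_set (hsub b π (by linarith) hbπ le_rfl)
    have h₂ := hf'.mono_set (hsub' b π (by linarith) hbπ le_rfl)
    refine IntervalIntegrable.congr_uIoo ⟨h₁.1.inf h₂.1, h₁.2.inf h₂.2⟩ fun y hy => ?_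
    rw [uIoo_of_le hbπ] at hy
    exact (polar_eq_min hb (by linarith [hy.1]) hy.1).symm
  exact hL.trans (hM.trans hR)

lemma intervalIntegrable_polar_sub (hf : IntervalIntegrable f volume (-π) π) (hb : 0 < b)
    (hbπ : b ≤ π) : IntervalIntegrable (fun y => polar b f y - f y) volume (2 * b - π) b :=
  ((intervalIntegrable_polar hf hb hbπ).sub hf).mono_set (uIcc_subset_uIcc
    (mem_uIcc_of_le (by linarith) (by linarith)) (mem_uIcc_of_le (by linarith) (by linarith)))

end Polar

section RobinSol

variable {α : ℝ} {g g' : ℝ → ℝ}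

lemma IntervalIntegrable.robinGreen_mul {a c : ℝ} (hg : IntervalIntegrable g volume a c) (x : ℝ) :
    IntervalIntegrable (fun y => robinGreen α x y * g y) volume a c :=
  hg.continuousOn_mul (continuous_robinGreen α x).continuousOn

lemma robinSol_sub_robinSol (hg : IntervalIntegrable g volume (-π) π)
    (hg' : IntervalIntegrable g' volume (-π) π) (x x' : ℝ) :
    robinSol α g x - robinSol α g' x'
      = ∫ y in (-π)..π, (robinGreen α x y * g y - robinGreen α x' y * g' y) :=
  (integral_sub (hg.robinGreen_mul x) (hg'.robinGreen_mul x')).symm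

lemma continuous_robinSol (hα : 0 < α) (hg : IntervalIntegrable g volume (-π) π) :
    Continuous (robinSol α g) := by
  have hπ : -π ≤ π := by linarith [pi_pos]
  set L := (cA α * π + 1) / 2 * ∫ y in (-π)..π, |g y|
  have hL : 0 ≤ L := mul_nonneg (by linarith [cA_pos hα, pi_pos, mul_pos (cA_pos hα) pi_pos])
    (integral_nonneg hπ fun _ _ => abs_nonneg _)
  refine (LipschitzWith.of_dist_le_mul (K := L.toNNReal) fun x z => ?_).continuous
  rw [Real.coe_toNNReal _ hL, dist_eq, dist_eq, robinSol_sub_robinSol hg hg]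
  calc ‖∫ y in (-π)..π, (robinGreen α x y * g y - robinGreen α z y * g y)‖
      ≤ ∫ y in (-π)..π, (cA α * π + 1) / 2 * |x - z| * |g y| := by
        refine norm_integral_le_of_norm_le hπ (Filter.Eventually.of_forall fun y hy => ?_)
          (hg.abs.const_mul _)
        rw [← sub_mul, norm_mul, Real.norm_eq_abs, Real.norm_eq_abs]
        exact mul_le_mul_of_nonneg_right
          (abs_robinGreen_sub_le hα (abs_le.2 ⟨hy.1.le, hy.2⟩) x z) (abs_nonneg _)
    _ = L * |x - z| := by
        rw [intervalIntegral.integral_const_mul]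
        ring

lemma robinSol_congr_ae (h : g =ᵐ[volume.restrict (Icc (-π) π)] g') :
    robinSol α g = robinSol α g' := by
  funext x
  refine integral_congr_ae_restrict ?_
  have hsub : uIoc (-π) π ⊆ Icc (-π) π :=
    uIoc_subset_uIcc.trans_eq (uIcc_of_le (by linarith [pi_pos]))
  filter_upwards [ae_restrict_of_ae_restrict_of_subset hsub h] with y hy
  rw [hy]

lemma robinSol_comp_neg (α : ℝ) (g : ℝ → ℝ) (x : ℝ) :
    robinSol α (fun t => g (-t)) x = robinSol α g (-x) := by
  have h := integral_comp_neg (a := -π) (b := π) (fun y => robinGreen α (-x) y * g y)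
  simp only [neg_neg, robinGreen_neg_neg] at h
  exact h

lemma integral_comp_robinSol_comp_neg (α : ℝ) (g φ : ℝ → ℝ) :
    ∫ x in (-π)..π, φ (robinSol α (fun t => g (-t)) x) = ∫ x in (-π)..π, φ (robinSol α g x) := by
  simp_rw [robinSol_comp_neg]
  simpa using integral_comp_neg (a := -π) (b := π) (fun x => φ (robinSol α g x))

end RobinSol

section PolarPositive

variable {α b : ℝ} {f : ℝ → ℝ}

lemma robinSol_polar_sub_robinSol (hf : IntervalIntegrable f volume (-π) π) (hb : b ∈ Ioo 0 π)
    (x : ℝ) :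
    robinSol α (polar b f) x - robinSol α f x
      = ∫ y in (2 * b - π)..b, polarKernel α b x y * (polar b f y - f y) := by
  obtain ⟨hb₀, hbπ⟩ := hb
  have hP := intervalIntegrable_polar hf hb₀ hbπ.le
  rw [robinSol_sub_robinSol hP hf, integral_eq_integral_add_integral_add_reflect
    ((hP.robinGreen_mul x).sub (hf.robinGreen_mul x)) (by linarith) hbπ.le]
  have hout : ∫ y in (-π)..(2 * b - π), (robinGreen α x y * polar b f y - robinGreen α x y * f y)
      = 0 := by
    rw [integral_congr_Ioo_of_le (by linarith) (g := fun _ => 0)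
      fun y hy => by simp only [polar_eq_self_of_lt hb₀ hy.2, sub_self]]
    exact integral_zero
  rw [hout, zero_add]
  refine integral_congr fun y hy => ?_
  rw [uIcc_of_le (by linarith)] at hy
  have h := polar_add_polar_reflect (f := f) hb₀ hbπ.le hy
  simp only [polarKernel]
  linear_combination robinGreen α x (2 * b - y) * h

lemma robinSol_le_robinSol_polar (hα : 0 < α) (hf : IntervalIntegrable f volume (-π) π)
    (hb : b ∈ Ioo 0 π) {x : ℝ} (hx : x ∈ Icc (-π) b) :
    robinSol α f x ≤ robinSol α (polar b f) x := by
  rw [← sub_nonneg, robinSol_polar_sub_robinSol hf hb]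
  exact integral_nonneg (by linarith [hb.2]) fun y hy =>
    mul_nonneg (polarKernel_nonneg hα hb.1.le hx hy) (sub_nonneg.2 (le_polar_of_mem_Icc hb.1 hy))

lemma robinSol_polar_sub_add_reflect (hf : IntervalIntegrable f volume (-π) π)
    (hb : b ∈ Ioo 0 π) (x : ℝ) :
    (robinSol α (polar b f) x - robinSol α f x)
      + (robinSol α (polar b f) (2 * b - x) - robinSol α f (2 * b - x))
      = ∫ y in (2 * b - π)..b, 2 * cA α * b * (b - y) * (polar b f y - f y) := by
  have hh := intervalIntegrable_polar_sub hf hb.1 hb.2.le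
  rw [robinSol_polar_sub_robinSol hf hb, robinSol_polar_sub_robinSol hf hb,
    ← integral_add (hh.continuousOn_mul (continuous_polarKernel α b x).continuousOn)
      (hh.continuousOn_mul (continuous_polarKernel α b (2 * b - x)).continuousOn)]
  refine integral_congr fun y _ => ?_
  linear_combination (polar b f y - f y) * polarKernel_add_polarKernel_reflect α b x y

lemma mul_polar_sub_nonneg (hα : 0 < α) (hb : 0 < b) {y : ℝ} (hy : y ∈ Icc (2 * b - π) b) :
    0 ≤ 2 * cA α * b * (b - y) * (polar b f y - f y) := by
  have := cA_pos hα
  have : 0 ≤ b - y := by linarith [hy.2]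
  exact mul_nonneg (by positivity) (sub_nonneg.2 (le_polar_of_mem_Icc hb hy))

lemma robinSol_add_reflect_le_robinSol_polar (hα : 0 < α)
    (hf : IntervalIntegrable f volume (-π) π) (hb : b ∈ Ioo 0 π) (x : ℝ) :
    robinSol α f x + robinSol α f (2 * b - x)
      ≤ robinSol α (polar b f) x + robinSol α (polar b f) (2 * b - x) := by
  have h := robinSol_polar_sub_add_reflect (α := α) hf hb x
  have hnn : 0 ≤ ∫ y in (2 * b - π)..b, 2 * cA α * b * (b - y) * (polar b f y - f y) :=
    integral_nonneg (by linarith [hb.2]) fun y hy => mul_polar_sub_nonneg hα hb.1 hy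
  linarith

lemma robinSol_reflect_le_robinSol_polar (hα : 0 < α) (hf : IntervalIntegrable f volume (-π) π)
    (hf0 : ∀ x ∈ Icc (-π) π, 0 ≤ f x) (hb : b ∈ Ioo 0 π) {x : ℝ} (hx : x ∈ Icc (2 * b - π) b) :
    robinSol α f (2 * b - x) ≤ robinSol α (polar b f) x := by
  obtain ⟨hb₀, hbπ⟩ := hb
  have hP := intervalIntegrable_polar hf hb₀ hbπ.le
  rw [← sub_nonneg, robinSol_sub_robinSol hP hf, integral_eq_integral_add_integral_add_reflect
    ((hP.robinGreen_mul x).sub (hf.robinGreen_mul _)) (by linarith) hbπ.le]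
  refine add_nonneg ?_ (integral_nonneg (by linarith) fun y hy => ?_)
  · rw [integral_congr_Ioo_of_le (by linarith) (g := fun y => polarKernel α b y x * f y)
      fun y hy => by
        simp only [polar_eq_self_of_lt hb₀ hy.2, polarKernel, robinGreen_comm α y]
        ring]
    exact integral_nonneg (by linarith) fun y hy => mul_nonneg
      (polarKernel_nonneg hα hb₀.le ⟨hy.1, by linarith [hy.2]⟩ hx)
      (hf0 y ⟨hy.1, by linarith [hy.2]⟩)
  · have h := robinGreen_reflect_mul_add_le hα hb₀.le hx hy
      (hf0 y ⟨by linarith [hy.1], by linarith [hy.2]⟩)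
      (hf0 (2 * b - y) ⟨by linarith [hy.2], by linarith [hy.1]⟩)
    rw [polar_eq_max hb₀ hy, polar_reflect_eq_min hb₀ hbπ.le hy]
    linarith

lemma robinSol_eq_robinSol_polar_of_integral_comp_eq (hα : 0 < α)
    (hf : IntervalIntegrable f volume (-π) π) (hf0 : ∀ x ∈ Icc (-π) π, 0 ≤ f x)
    (hb : b ∈ Ioo 0 π) {φ : ℝ → ℝ} (hφ : ConvexOn ℝ univ φ) (hφm : StrictMono φ)
    (heq : ∫ x in (-π)..π, φ (robinSol α f x) = ∫ x in (-π)..π, φ (robinSol α (polar b f) x)) :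
    robinSol α f b = robinSol α (polar b f) b := by
  have ⟨hb₀, hbπ⟩ := hb
  have hφc : Continuous φ := continuousOn_univ.1 (hφ.continuousOn isOpen_univ)
  have hu : Continuous fun x => φ (robinSol α f x) := hφc.comp (continuous_robinSol hα hf)
  have hv : Continuous fun x => φ (robinSol α (polar b f) x) :=
    hφc.comp (continuous_robinSol hα (intervalIntegrable_polar hf hb₀ hbπ.le))
  set F := fun x => φ (robinSol α (polar b f) x) - φ (robinSol α f x) with hF_def
  have hF : Continuous F := hv.sub hu
  have hout : 0 ≤ ∫ x in (-π)..(2 * b - π), F x :=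
    integral_nonneg (by linarith) fun x hx => sub_nonneg.2 (hφm.monotone
      (robinSol_le_robinSol_polar hα hf hb ⟨hx.1, by linarith [hx.2]⟩))
  have hpair (x : ℝ) (hx : x ∈ Icc (2 * b - π) b) : 0 ≤ F x + F (2 * b - x) := by
    have := hφ.map_add_map_le_of_weakMajorization hφm.monotone
      (robinSol_le_robinSol_polar hα hf hb ⟨by linarith [hx.1], hx.2⟩)
      (robinSol_reflect_le_robinSol_polar hα hf hf0 hb hx)
      (robinSol_add_reflect_le_robinSol_polar hα hf hb x)
    simp only [hF_def]
    linarith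
  have hzero : ∫ x in (2 * b - π)..b, (F x + F (2 * b - x)) = 0 := by
    have htotal : ∫ x in (-π)..π, F x = 0 := by
      simp only [hF_def]
      rw [integral_sub (hv.intervalIntegrable _ _) (hu.intervalIntegrable _ _), heq, sub_self]
    rw [integral_eq_integral_add_integral_add_reflect (hF.intervalIntegrable _ _) (by linarith)
      hbπ.le] at htotal
    linarith [integral_nonneg (μ := volume) (by linarith) hpair]
  have hFb : F b + F (2 * b - b) = 0 := by
    refine le_antisymm (not_lt.1 fun hpos => ?_) (hpair b ⟨by linarith, le_rfl⟩)
    have := integral_pos (f := fun x => F x + F (2 * b - x)) (by linarith)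
      (hF.add (hF.comp (continuous_const.sub continuous_id))).continuousOn
      (fun x hx => hpair x ⟨hx.1.le, hx.2⟩) ⟨b, ⟨by linarith, le_rfl⟩, hpos⟩
    linarith
  have hφb : φ (robinSol α (polar b f) b) = φ (robinSol α f b) := by
    rw [show 2 * b - b = b by ring] at hFb
    simp only [hF_def] at hFb
    linarith
  exact (hφm.injective hφb).symm

lemma polar_ae_eq_of_robinSol_eq (hα : 0 < α) (hf : IntervalIntegrable f volume (-π) π)
    (hb : b ∈ Ioo 0 π) (h : robinSol α f b = robinSol α (polar b f) b) :
    ∀ᵐ y, y ∈ Ioo (2 * b - π) b → polar b f y = f y := by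
  have ⟨hb₀, hbπ⟩ := hb
  set w := fun y => 2 * cA α * b * (b - y) * (polar b f y - f y)
  have hw : ∫ y in (2 * b - π)..b, w y = 0 := by
    rw [← robinSol_polar_sub_add_reflect hf hb b, show 2 * b - b = b by ring, h]
    ring
  have hnn : 0 ≤ᵐ[volume.restrict (Ioc (2 * b - π) b)] w :=
    ae_restrict_of_forall_mem measurableSet_Ioc fun y hy =>
      mul_polar_sub_nonneg hα hb₀ (Ioc_subset_Icc_self hy)
  have hint : IntervalIntegrable w volume (2 * b - π) b :=
    (intervalIntegrable_polar_sub hf hb₀ hbπ.le).continuousOn_mul (by fun_prop)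
  have hae := (integral_eq_zero_iff_of_le_of_nonneg_ae (by linarith) hnn hint).1 hw
  rw [Filter.EventuallyEq, ae_restrict_iff' measurableSet_Ioc] at hae
  filter_upwards [hae] with y hy hyI
  have hpos : 0 < 2 * cA α * b * (b - y) := by
    have := cA_pos hα
    have : 0 < b - y := by linarith [hyI.2]
    positivity
  have := (mul_eq_zero.1 (hy (Ioo_subset_Ioc_self hyI))).resolve_left hpos.ne'
  linarith

lemma ae_eq_polar_of_ae_eq_on_Ioo (hb : b ∈ Ioo 0 π)
    (h : ∀ᵐ y, y ∈ Ioo (2 * b - π) b → polar b f y = f y) :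
    f =ᵐ[volume.restrict (Icc (-π) π)] polar b f := by
  obtain ⟨hb₀, hbπ⟩ := hb
  have hσ : ∀ᵐ y, 2 * b - y ∈ Ioo (2 * b - π) b → polar b f (2 * b - y) = f (2 * b - y) :=
    (Measure.measurePreserving_sub_left volume (2 * b)).quasiMeasurePreserving.ae h
  rw [Filter.EventuallyEq, ae_restrict_iff' measurableSet_Icc]
  filter_upwards [h, hσ, Measure.ae_ne volume (2 * b - π), Measure.ae_ne volume b,
    Measure.ae_ne volume π] with y hy hyσ h₁ h₂ h₃ hyI
  rcases h₁.lt_or_gt with hlt | hgt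
  · exact (polar_eq_self_of_lt hb₀ hlt).symm
  rcases h₂.lt_or_gt with hlt' | hgt'
  · exact (hy ⟨hgt, hlt'⟩).symm
  have hsum := polar_add_polar_reflect (f := f) (x := 2 * b - y) hb₀ hbπ.le
    ⟨by linarith [hyI.2], by linarith⟩
  rw [sub_sub_cancel] at hsum
  have := hyσ ⟨by linarith [h₃.lt_of_le hyI.2], by linarith⟩
  linarith

lemma ae_eq_polar_of_integral_comp_robinSol_eq (hα : 0 < α)
    (hf : IntervalIntegrable f volume (-π) π) (hf0 : ∀ x ∈ Icc (-π) π, 0 ≤ f x)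
    (hb : b ∈ Ioo 0 π) {φ : ℝ → ℝ} (hφ : ConvexOn ℝ univ φ) (hφm : StrictMono φ)
    (heq : ∫ x in (-π)..π, φ (robinSol α f x) = ∫ x in (-π)..π, φ (robinSol α (polar b f) x)) :
    f =ᵐ[volume.restrict (Icc (-π) π)] polar b f :=
  ae_eq_polar_of_ae_eq_on_Ioo hb (polar_ae_eq_of_robinSol_eq hα hf hb
    (robinSol_eq_robinSol_polar_of_integral_comp_eq hα hf hf0 hb hφ hφm heq))

end PolarPositive

lemma ae_eq_restrict_Icc_of_comp_neg {g g' : ℝ → ℝ} {a : ℝ}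
    (h : (fun x => g (-x)) =ᵐ[volume.restrict (Icc (-a) a)] fun x => g' (-x)) :
    g =ᵐ[volume.restrict (Icc (-a) a)] g' := by
  rw [Filter.EventuallyEq, ae_restrict_iff' measurableSet_Icc] at h ⊢
  filter_upwards [(Measure.measurePreserving_neg volume).quasiMeasurePreserving.ae h]
    with x hx hxI
  simpa using hx ⟨by linarith [hxI.2], by linarith [hxI.1]⟩

/-- **Polarization and convex integral means: equality case.** -/
theorem polarization_convex_integral_means_eq_iff
    (α : ℝ) (hα : 0 < α)
    (f : ℝ → ℝ) (hf : IntegrableOn f (Icc (-π) π))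
    (hf0 : ∀ x ∈ Icc (-π) π, 0 ≤ f x)
    (b : ℝ) (hb : b ∈ Ioo (-π) 0 ∪ Ioo 0 π)
    (φ : ℝ → ℝ) (hφconv : ConvexOn ℝ univ φ) (hφmono : StrictMono φ) :
    (∫ x in (-π)..π, φ (robinSol α f x)) = (∫ x in (-π)..π, φ (robinSol α (polar b f) x)) ↔
      f =ᵐ[volume.restrict (Icc (-π) π)] polar b f := by
  have hπ : -π ≤ π := by linarith [pi_pos]
  have hf' : IntervalIntegrable f volume (-π) π :=
    (intervalIntegrable_iff_integrableOn_Icc_of_le hπ).2 hf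
  refine ⟨fun heq => ?_, fun hae => by rw [robinSol_congr_ae hae]⟩
  rcases hb with hb | hb
  · have hpolar : polar (-b) (fun t => f (-t)) = fun x => polar b f (-x) :=
      funext (polar_neg_comp_neg hb f)
    have hg : IntervalIntegrable (fun t => f (-t)) volume (-π) π := by
      simpa using ((IntervalIntegrable.iff_comp_neg (f := f) (a := -π) (b := π)).1 hf').symm
    have hg0 (x : ℝ) (hx : x ∈ Icc (-π) π) : 0 ≤ f (-x) :=
      hf0 (-x) ⟨by linarith [hx.2], by linarith [hx.1]⟩
    refine ae_eq_restrict_Icc_of_comp_neg (hpolar ▸ ae_eq_polar_of_integral_comp_robinSol_eq hα hg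
      hg0 ⟨by linarith [hb.2], by linarith [hb.1]⟩ hφconv hφmono ?_)
    rwa [hpolar, integral_comp_robinSol_comp_neg, integral_comp_robinSol_comp_neg]
  · exact ae_eq_polar_of_integral_comp_robinSol_eq hα hf' hf0 hb hφconv hφmono heq
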